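/- Let R = K⟨x,y⟩/(xy−1), p(x) = Σ_{i=0}^{d} α_i x^i ∈ K[x] ⊂ R a nonzero polynomial, and define p*(y) = Σ_{i=0}^{d} α_i y^{d−i} ∈ K[y] ⊂ R. Then the left ideals satisfy Rp* = Rp + I, where I is the two-sided ideal generated by 1−yx. -/
import Mathlib


noncomputable section

/-- The defining relation of the Toeplitz/Jacobson algebra: `x * y = 1`. -/
inductive ToeplitzRel (K : Type*) [Field K] :
    FreeAlgebra K (Fin 2) → FreeAlgebra K (Fin 2) → Prop
  | rel : ToeplitzRel K (FreeAlgebra.ι K 0 * FreeAlgebra.ι K 1) 1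

/-- The Toeplitz/Jacobson algebra `R = K⟨x,y⟩/(xy-1)`. -/
abbrev Toeplitz (K : Type*) [Field K] := RingQuot (ToeplitzRel K)

variable (K : Type*) [Field K]

/-- The image of the generator `x` in `R`. -/
def tx : Toeplitz K := RingQuot.mkAlgHom K (ToeplitzRel K) (FreeAlgebra.ι K 0)

/-- The image of the generator `y` in `R`. -/
def ty : Toeplitz K := RingQuot.mkAlgHom K (ToeplitzRel K) (FreeAlgebra.ι K 1)

/-- `f n = y^(n-1) x^(n-1) - y^n x^n`. -/
def tf (n : ℕ) : Toeplitz K := ty K ^ (n-1) * tx K ^ (n-1) - ty K ^ n * tx K ^ n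

section Aux
variable {K}


lemma txy : tx K * ty K = 1 := by
  have := RingQuot.mkAlgHom_rel K (ToeplitzRel.rel (K := K))
  simpa [tx, ty, map_mul, map_one] using this

lemma txy_pow (n : ℕ) : tx K ^ n * ty K ^ n = 1 := by
  induction n with
  | zero => simp
  | succ m ih =>
    rw [pow_succ, pow_succ', mul_assoc, ← mul_assoc (tx K), txy, one_mul, ih]

lemma xpow_mul_ypow_le {i n : ℕ} (h : i ≤ n) : tx K ^ i * ty K ^ n = ty K ^ (n - i) := by
  have : ty K ^ n = ty K ^ i * ty K ^ (n - i) := by rw [← pow_add, Nat.add_sub_cancel' h]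
  rw [this, ← mul_assoc, txy_pow, one_mul]

lemma xpow_mul_ypow_ge {i n : ℕ} (h : n ≤ i) : tx K ^ i * ty K ^ n = tx K ^ (i - n) := by
  have : tx K ^ i = tx K ^ (i - n) * tx K ^ n := by rw [← pow_add, Nat.sub_add_cancel h]
  rw [this, mul_assoc, txy_pow, mul_one]

lemma e_mul_y : (1 - ty K * tx K) * ty K = 0 := by
  rw [sub_mul, one_mul, mul_assoc, txy, mul_one, sub_self]

lemma e_mul_ypow {n : ℕ} (h : n ≠ 0) : (1 - ty K * tx K) * ty K ^ n = 0 := by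
  obtain ⟨m, rfl⟩ := Nat.exists_eq_succ_of_ne_zero h
  rw [pow_succ', ← mul_assoc, e_mul_y, zero_mul]

lemma e_xpow_ypow (m d : ℕ) :
    (1 - ty K * tx K) * (tx K ^ m * ty K ^ d) =
      if m < d then 0 else (1 - ty K * tx K) * tx K ^ (m - d) := by
  split_ifs with h
  · rw [xpow_mul_ypow_le h.le, e_mul_ypow (by omega)]
  · rw [xpow_mul_ypow_ge (by omega)]

open Polynomial Finset in
lemma e_xpow_mem (p : Polynomial K) (hp : p ≠ 0) (j : ℕ) :
    (1 - ty K * tx K) * tx K ^ j ∈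
      Submodule.span (Toeplitz K) {Polynomial.aeval (tx K) p * ty K ^ p.natDegree} := by
  set d := p.natDegree with hd
  set e : Toeplitz K := 1 - ty K * tx K with he
  set S := Submodule.span (Toeplitz K) {Polynomial.aeval (tx K) p * ty K ^ d} with hS
  have hc : p.coeff d ≠ 0 := by
    rw [hd, Polynomial.coeff_natDegree]
    exact Polynomial.leadingCoeff_ne_zero.mpr hp
  induction j using Nat.strong_induction_on with
  | _ j IH =>
    have hmem : (e * tx K ^ j) * (Polynomial.aeval (tx K) p * ty K ^ d) ∈ S := by
      rw [hS]
      exact Submodule.smul_mem _ _ (Submodule.mem_span_singleton_self _)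
    have hcalc : (e * tx K ^ j) * (Polynomial.aeval (tx K) p * ty K ^ d) =
        (∑ i ∈ range d, p.coeff i •
          (if j + i < d then 0 else e * tx K ^ (j + i - d))) +
          p.coeff d • (e * tx K ^ j) := by
      rw [aeval_eq_sum_range, Finset.sum_mul, Finset.mul_sum]
      rw [show d + 1 = d + 1 from rfl, Finset.sum_range_succ]
      congr 1
      · refine Finset.sum_congr rfl fun i _ => ?_
        rw [smul_mul_assoc, mul_smul_comm]
        congr 1
        have h1 : e * tx K ^ j * (tx K ^ i * ty K ^ d) =
            e * (tx K ^ (j + i) * ty K ^ d) := by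
          rw [pow_add]; simp [mul_assoc]
        rw [h1, e_xpow_ypow]
      · rw [smul_mul_assoc, mul_smul_comm, txy_pow, mul_one]
    rw [hcalc] at hmem
    have hT : (∑ i ∈ range d, p.coeff i •
        (if j + i < d then 0 else e * tx K ^ (j + i - d))) ∈ S := by
      refine Submodule.sum_mem _ fun i hi => ?_
      refine Submodule.smul_of_tower_mem _ _ ?_
      split_ifs with h
      · exact Submodule.zero_mem _
      · exact IH _ (by simp at hi; omega)
    have := Submodule.sub_mem _ hmem hT
    rw [add_sub_cancel_left] at this
    have h2 := Submodule.smul_of_tower_mem S (p.coeff d)⁻¹ this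
    rwa [smul_smul, inv_mul_cancel₀ hc, one_smul] at h2

lemma e_xpow_mul_mem (r : Toeplitz K) (j : ℕ) :
    (1 - ty K * tx K) * tx K ^ j * r ∈
      Submodule.span K (Set.range fun n => (1 - ty K * tx K) * tx K ^ n) := by
  set W := Submodule.span K (Set.range fun n => (1 - ty K * tx K) * tx K ^ n) with hW
  obtain ⟨a, rfl⟩ := RingQuot.mkAlgHom_surjective K (ToeplitzRel K) r
  induction a using FreeAlgebra.induction generalizing j with
  | grade0 c =>
      rw [AlgHom.commutes, ← Algebra.commutes, ← Algebra.smul_def]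
      exact Submodule.smul_mem _ _ (Submodule.subset_span ⟨j, rfl⟩)
  | grade1 i =>
      fin_cases i
      · show (1 - ty K * tx K) * tx K ^ j * tx K ∈ W
        rw [mul_assoc, ← pow_succ]
        exact Submodule.subset_span ⟨j + 1, rfl⟩
      · show (1 - ty K * tx K) * tx K ^ j * ty K ∈ W
        match j with
        | 0 => rw [pow_zero, mul_one, e_mul_y]; exact Submodule.zero_mem _
        | n + 1 =>
            rw [pow_succ, ← mul_assoc, mul_assoc _ (tx K) (ty K), txy, mul_one]
            exact Submodule.subset_span ⟨n, rfl⟩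
  | mul a b IHa IHb =>
      rw [map_mul, ← mul_assoc]
      refine Submodule.span_induction (p := fun w _ =>
          w * RingQuot.mkAlgHom K (ToeplitzRel K) b ∈ W) ?_ ?_ ?_ ?_ (IHa j)
      · rintro z ⟨n, rfl⟩; exact IHb n
      · show (0 : Toeplitz K) * _ ∈ W; rw [zero_mul]; exact Submodule.zero_mem _
      · intro w1 w2 _ _ h1 h2; show (w1 + w2) * _ ∈ W; rw [add_mul]
        exact Submodule.add_mem _ h1 h2
      · intro c w _ h; show (c • w) * _ ∈ W; rw [smul_mul_assoc]
        exact Submodule.smul_mem _ _ h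
  | add a b IHa IHb =>
      rw [map_add, mul_add]
      exact Submodule.add_mem _ (IHa j) (IHb j)

lemma span_e_le (z : Toeplitz K) (hz : z ∈ TwoSidedIdeal.span {1 - ty K * tx K}) :
    z ∈ Submodule.span (Toeplitz K)
      (Set.range fun n => (1 - ty K * tx K) * tx K ^ n) := by
  set V := Submodule.span (Toeplitz K)
    (Set.range fun n => (1 - ty K * tx K) * tx K ^ n) with hV
  have hWV : ∀ w ∈ Submodule.span K
      (Set.range fun n => (1 - ty K * tx K) * tx K ^ n), w ∈ V := by
    intro w hw
    exact Submodule.span_induction (p := fun w _ => w ∈ V)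
      (fun u hu => Submodule.subset_span hu) (Submodule.zero_mem _)
      (fun a b _ _ ha hb => Submodule.add_mem _ ha hb)
      (fun c u _ hu => Submodule.smul_of_tower_mem _ _ hu) hw
  have hVr : ∀ v ∈ V, ∀ r : Toeplitz K, v * r ∈ V := by
    intro v hv
    refine Submodule.span_induction (p := fun w _ => ∀ r, w * r ∈ V) ?_ ?_ ?_ ?_ hv
    · rintro w ⟨n, rfl⟩ r; exact hWV _ (e_xpow_mul_mem r n)
    · intro r; rw [zero_mul]; exact Submodule.zero_mem _
    · intro a b _ _ ha hb r; rw [add_mul]; exact Submodule.add_mem _ (ha r) (hb r)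
    · intro c w _ hw r; rw [smul_mul_assoc]; exact Submodule.smul_mem _ _ (hw r)
  let T : TwoSidedIdeal (Toeplitz K) := TwoSidedIdeal.mk' (V : Set (Toeplitz K))
    (Submodule.zero_mem _) (fun ha hb => Submodule.add_mem _ ha hb)
    (fun ha => Submodule.neg_mem _ ha)
    (fun {a b} hb => by rw [← smul_eq_mul]; exact Submodule.smul_mem V a hb)
    (fun {a b} ha => hVr _ ha b)
  have he : (1 - ty K * tx K) ∈ V := by
    have h0 : (1 - ty K * tx K) * tx K ^ 0 ∈ V := Submodule.subset_span ⟨0, rfl⟩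
    simpa using h0
  have hzT := TwoSidedIdeal.mem_span_iff.mp hz T (by
    intro w hw
    rw [Set.mem_singleton_iff] at hw
    subst hw
    exact (TwoSidedIdeal.mem_mk' _ _ _ _ _ _ _).mpr he)
  exact (TwoSidedIdeal.mem_mk' _ _ _ _ _ _ _).mp hzT

lemma one_sub_ypow_xpow_mem (i : ℕ) :
    1 - ty K ^ i * tx K ^ i ∈ TwoSidedIdeal.span {1 - ty K * tx K} := by
  induction i with
  | zero => simpa using (TwoSidedIdeal.span {1 - ty K * tx K}).zero_mem
  | succ n ih =>
    have h1 : (1 : Toeplitz K) - ty K ^ (n + 1) * tx K ^ (n + 1) =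
        ty K * (1 - ty K ^ n * tx K ^ n) * tx K + (1 - ty K * tx K) := by
      rw [pow_succ', pow_succ]
      simp only [mul_sub, sub_mul, mul_one, one_mul, mul_assoc]
      abel
    rw [h1]
    exact (TwoSidedIdeal.span {1 - ty K * tx K}).add_mem
      (TwoSidedIdeal.mul_mem_right _ _ _
        (TwoSidedIdeal.mul_mem_left _ _ _ ih))
      (TwoSidedIdeal.subset_span rfl)


end Aux

open Polynomial Finset in
/-- For a nonzero polynomial `p(x) = Σ_{i≤d} α_i x^i` of degree `d`, with
`p*(y) := p(x) y^d = Σ_{i≤d} α_i y^(d-i)`, the left ideals satisfy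
`R p* = R p + I`, where `I = ⟨1-yx⟩`. -/
theorem toeplitz_pstar_ideal (p : Polynomial K) (hp : p ≠ 0) :
    Submodule.span (Toeplitz K)
        {Polynomial.aeval (tx K) p * ty K ^ p.natDegree} =
      Submodule.span (Toeplitz K) {Polynomial.aeval (tx K) p} ⊔
        TwoSidedIdeal.asIdeal (TwoSidedIdeal.span {1 - ty K * tx K}) := by
  set d := p.natDegree with hd
  apply le_antisymm
  · rw [Submodule.span_le, Set.singleton_subset_iff]
    have hexp : Polynomial.aeval (tx K) p * ty K ^ d -
        ty K ^ d * Polynomial.aeval (tx K) p =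
        ∑ i ∈ range (d + 1),
          p.coeff i • (ty K ^ (d - i) * (1 - ty K ^ i * tx K ^ i)) := by
      rw [aeval_eq_sum_range, Finset.sum_mul, Finset.mul_sum, ← Finset.sum_sub_distrib]
      refine Finset.sum_congr rfl fun i hi => ?_
      have hid : i ≤ d := by simp only [Finset.mem_range] at hi; omega
      rw [smul_mul_assoc, mul_smul_comm]
      have hterm : tx K ^ i * ty K ^ d - ty K ^ d * tx K ^ i =
          ty K ^ (d - i) * (1 - ty K ^ i * tx K ^ i) := by
        rw [xpow_mul_ypow_le hid, mul_sub, mul_one, ← mul_assoc, ← pow_add,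
          Nat.sub_add_cancel hid]
      rw [← hterm, smul_sub]
    have hB : Polynomial.aeval (tx K) p * ty K ^ d -
        ty K ^ d * Polynomial.aeval (tx K) p ∈
        TwoSidedIdeal.asIdeal (TwoSidedIdeal.span {1 - ty K * tx K}) := by
      rw [hexp]
      refine Submodule.sum_mem _ fun i _ => Submodule.smul_of_tower_mem _ _ ?_
      rw [TwoSidedIdeal.mem_asIdeal]
      exact TwoSidedIdeal.mul_mem_left _ _ _ (one_sub_ypow_xpow_mem i)
    refine Submodule.mem_sup.mpr
      ⟨ty K ^ d * Polynomial.aeval (tx K) p,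
        Submodule.mem_span_singleton.mpr ⟨ty K ^ d, rfl⟩,
        Polynomial.aeval (tx K) p * ty K ^ d -
          ty K ^ d * Polynomial.aeval (tx K) p, hB, by abel⟩
  · refine sup_le ?_ ?_
    · rw [Submodule.span_le, Set.singleton_subset_iff]
      have hcomm : tx K ^ d * Polynomial.aeval (tx K) p =
          Polynomial.aeval (tx K) p * tx K ^ d := by
        rw [aeval_eq_sum_range, Finset.mul_sum, Finset.sum_mul]
        refine Finset.sum_congr rfl fun i _ => ?_
        rw [mul_smul_comm, smul_mul_assoc, ← pow_add, ← pow_add, add_comm]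
      have hpx : tx K ^ d * (Polynomial.aeval (tx K) p * ty K ^ d) =
          Polynomial.aeval (tx K) p := by
        rw [← mul_assoc, hcomm, mul_assoc, txy_pow, mul_one]
      exact Submodule.mem_span_singleton.mpr ⟨tx K ^ d, by rw [smul_eq_mul, hpx]⟩
    · intro z hz
      have h1 := span_e_le z (TwoSidedIdeal.mem_asIdeal.mp hz)
      refine Submodule.span_le.mpr ?_ h1
      rintro _ ⟨n, rfl⟩
      exact e_xpow_mem p hp n
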